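/- Let A be an interpolatory mask, i.e. A_{2j} = D·δ_j where δ is the matrix delta sequence and D = diag(1,1/2)⊗I. Define B̃ by (B̃^T)_k = (−1)^{1−k} A_{1−k} D^{−1}. Then for every sequence c, (D_{B̃^T} c)_i = (c − S_A D^{−1} D_δ c)_{2i+1}, i.e. D_{B̃^T} = D_δ L (id − S_A D^{−1} D_δ), where (D_δ c)_j = c_{2j} and (L c)_i = c_{i+1}. -/

import Mathlib

open scoped BigOperators
open Matrix

/-- Subdivision operator `(S_A c)_j = ∑_k A_{j-2k} c_k`. -/
noncomputable def subd {m : ℕ} (A : ℤ → Matrix (Fin 2 × Fin m) (Fin 2 × Fin m) ℝ)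
    (c : ℤ → Fin 2 × Fin m → ℝ) : ℤ → Fin 2 × Fin m → ℝ :=
  fun j => ∑ᶠ k : ℤ, (A (j - 2 * k)).mulVec (c k)

/-- Decomposition operator `(D_M c)_j = ∑_i M_{i-2j} c_i`. -/
noncomputable def decomp {m : ℕ} (M : ℤ → Matrix (Fin 2 × Fin m) (Fin 2 × Fin m) ℝ)
    (c : ℤ → Fin 2 × Fin m → ℝ) : ℤ → Fin 2 × Fin m → ℝ :=
  fun j => ∑ᶠ i : ℤ, (M (i - 2 * j)).mulVec (c i)

/-- The matrix `D = diag(1, 1/2) ⊗ I_m`. -/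
noncomputable def Dmat (m : ℕ) : Matrix (Fin 2 × Fin m) (Fin 2 × Fin m) ℝ :=
  Matrix.of fun p q => if p = q then (if p.1 = 0 then 1 else 1 / 2) else 0

/-- The matrix `D⁻¹ = diag(1, 2) ⊗ I_m`. -/
noncomputable def Dinv (m : ℕ) : Matrix (Fin 2 × Fin m) (Fin 2 × Fin m) ℝ :=
  Matrix.of fun p q => if p = q then (if p.1 = 0 then 1 else 2) else 0

/-!
Split the decomposition sum `∑ᵢ (B̃ᵀ)_{i-2j} c_i` by the parity of `i`. On even `i` the mask `B̃ᵀ`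
picks up the odd entries of `A` with sign `-1`, which is `-(S_A D⁻¹ D_δ c)_{2j+1}`. On odd `i` it
picks up the even entries of `A`; by interpolation only `A_0 = D` survives, contributing
`D D⁻¹ c_{2j+1} = c_{2j+1}`.
-/

open Function Set

theorem finsum_int_eq_even_add_odd {M : Type*} [AddCommMonoid M] {f : ℤ → M}
    (hf : (support f).Finite) :
    ∑ᶠ a, f a = ∑ᶠ t, f (2 * t) + ∑ᶠ t, f (2 * t + 1) := by
  have hcover : range (2 * · : ℤ → ℤ) ∪ range (2 * · + 1 : ℤ → ℤ) = univ := by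
    refine eq_univ_of_forall fun a => ?_
    rcases Int.even_or_odd' a with ⟨t, rfl | rfl⟩
    exacts [Or.inl ⟨t, rfl⟩, Or.inr ⟨t, rfl⟩]
  have hdisj : Disjoint (range (2 * · : ℤ → ℤ)) (range (2 * · + 1 : ℤ → ℤ)) := by
    refine Set.disjoint_left.2 ?_
    rintro _ ⟨s, rfl⟩ ⟨t, ht⟩
    simp only at ht
    omega
  rw [← finsum_mem_univ f, ← hcover,
    finsum_mem_union' hdisj (hf.subset inter_subset_right) (hf.subset inter_subset_right),
    finsum_mem_range (fun s t h => by simpa using h), finsum_mem_range (fun s t h => by simpa using h)]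

theorem finite_support_decomp_summand {m : ℕ} {M : ℤ → Matrix (Fin 2 × Fin m) (Fin 2 × Fin m) ℝ}
    (hM : (support M).Finite) (c : ℤ → Fin 2 × Fin m → ℝ) (j : ℤ) :
    (support fun i => (M (i - 2 * j)).mulVec (c i)).Finite := by
  refine (hM.preimage (f := fun i => i - 2 * j) sub_left_injective.injOn).subset fun i hi h => ?_
  exact hi (by simp [show M (i - 2 * j) = 0 from h])

theorem Dmat_mul_Dinv (m : ℕ) : Dmat m * Dinv m = 1 := by
  ext ⟨a, i⟩ ⟨b, j⟩
  fin_cases a <;> fin_cases b <;> simp [Dmat, Dinv, mul_apply, one_apply]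

section InterpolatoryMask

variable {m : ℕ} {A BtT : ℤ → Matrix (Fin 2 × Fin m) (Fin 2 × Fin m) ℝ}

theorem BtT_two_mul (hBtT : ∀ k : ℤ, BtT k = ((-1 : ℝ) ^ (1 - k)) • (A (1 - k) * Dinv m)) (j : ℤ) :
    BtT (2 * j) = -(A (1 - 2 * j) * Dinv m) := by
  rw [hBtT, Odd.neg_one_zpow ⟨-j, by ring⟩, neg_one_smul]

theorem BtT_two_mul_add_one (hinterp : ∀ j : ℤ, A (2 * j) = if j = 0 then Dmat m else 0)
    (hBtT : ∀ k : ℤ, BtT k = ((-1 : ℝ) ^ (1 - k)) • (A (1 - k) * Dinv m)) (j : ℤ) :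
    BtT (2 * j + 1) = if j = 0 then 1 else 0 := by
  rw [hBtT, show 1 - (2 * j + 1) = 2 * -j by ring, Even.neg_one_zpow ⟨-j, by ring⟩, one_smul,
    hinterp]
  simp only [neg_eq_zero]
  split_ifs
  exacts [Dmat_mul_Dinv m, zero_mul _]

end InterpolatoryMask

/-- For an interpolatory mask `A` (`A_{2j} = D δ_j`) and the mask `Bt` with
`(Btᵀ)_k = (−1)^{1−k} A_{1−k} D⁻¹`, the decomposition operator `D_{Btᵀ}` satisfies
`(D_{Btᵀ} c)_i = (c − S_A D⁻¹ D_δ c)_{2i+1}`, i.e. `D_{Btᵀ} = D_δ L (id − S_A D⁻¹ D_δ)`. -/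
theorem pred_corr_wavelet_operator {m : ℕ}
    (A : ℤ → Matrix (Fin 2 × Fin m) (Fin 2 × Fin m) ℝ)
    (hA : (Function.support A).Finite)
    (hinterp : ∀ j : ℤ, A (2 * j) = if j = 0 then Dmat m else 0)
    (BtT : ℤ → Matrix (Fin 2 × Fin m) (Fin 2 × Fin m) ℝ)
    (hBtT : ∀ k : ℤ, BtT k = ((-1 : ℝ) ^ (1 - k)) • (A (1 - k) * Dinv m)) :
    ∀ (c : ℤ → Fin 2 × Fin m → ℝ) (i : ℤ),
      decomp BtT c i =
        c (2 * i + 1) - subd A (fun j => (Dinv m).mulVec (c (2 * j))) (2 * i + 1) := by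
  intro c i
  have hBtT_fin : (support BtT).Finite :=
    (hA.preimage (f := fun k => 1 - k) sub_right_injective.injOn).subset fun k hk h =>
      hk (by rw [hBtT, show A (1 - k) = 0 from h, zero_mul, smul_zero])
  have h_even (t : ℤ) : (BtT (2 * t - 2 * i)).mulVec (c (2 * t)) =
      -(A (2 * i + 1 - 2 * t)).mulVec ((Dinv m).mulVec (c (2 * t))) := by
    rw [← mul_sub, BtT_two_mul hBtT, show 1 - 2 * (t - i) = 2 * i + 1 - 2 * t by ring,
      neg_mulVec, mulVec_mulVec]
  have h_odd (t : ℤ) (ht : t ≠ i) : (BtT (2 * t + 1 - 2 * i)).mulVec (c (2 * t + 1)) = 0 := by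
    rw [show 2 * t + 1 - 2 * i = 2 * (t - i) + 1 by ring, BtT_two_mul_add_one hinterp hBtT,
      if_neg (sub_ne_zero.2 ht), zero_mulVec]
  rw [decomp, finsum_int_eq_even_add_odd (finite_support_decomp_summand hBtT_fin c i),
    finsum_congr h_even, finsum_neg_distrib, finsum_eq_single _ i h_odd,
    show 2 * i + 1 - 2 * i = 2 * 0 + 1 by ring, BtT_two_mul_add_one hinterp hBtT, if_pos rfl,
    one_mulVec, neg_add_eq_sub]
  rfl
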